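/- arXiv:2112.15266 — 3 statements merged into one kernel-verified Lean document; each statement's English description precedes it below -/
import Mathlib

section
/- Let J(α₊,β₊,α₋,β₋) = I(ρ(α₊,β₊), ρ(α₋,β₋), w(α₊,β₊), w(α₋,β₋)) where I is the jump function, ρ, w are the smooth inverse functions of the Riemann-invariant change of variables (so ∂ρ/∂β = ρ/(2η) and ∂w/∂β = -1/2 at the plus state). Then, at any point where the jump conditions V = [ρw]/[ρ] and I = 0 hold, ∂J/∂β₊ = -([ρ]ρ₊/(2η₊))·(V - c_in₊)² and ∂J/∂α₊ = -([ρ]ρ₊/(2η₊))·(c_out₊ - V)², where c_in₊ = w₊ - η₊ and c_out₊ = w₊ + η₊. -/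
/-!
Differentiating `I` along a curve of plus states gives a linear form in `(ρ', w')`. On the shock
set one may trade `[ρw]` for `V [ρ]` and, via `I = 0`, `[ρw² + p]` for `V² [ρ]`, which collapses
the derivative to `[ρ] (2ρ w' (V - w) - ρ' ((V - w)² + p'(ρ)))`. Along the Riemann-invariant
directions `ρ' = ρ/(2η)`, `w' = ∓1/2` this is `-[ρ]ρ/(2η)` times the perfect square
`(V - w ± η)²`.
-/

def jumpFunction (p : ℝ → ℝ) (ρp ρm wp wm : ℝ) : ℝ :=
  (ρp * wp - ρm * wm) ^ 2 - ((ρp * wp ^ 2 + p ρp) - (ρm * wm ^ 2 + p ρm)) * (ρp - ρm)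

section PlusStateCurve

variable {p ρ w : ℝ → ℝ} {ρm wm t ρ' w' p' : ℝ}

theorem hasDerivAt_jumpFunction (hp : HasDerivAt p p' (ρ t)) (hρ : HasDerivAt ρ ρ' t)
    (hw : HasDerivAt w w' t) :
    HasDerivAt (fun s => jumpFunction p (ρ s) ρm (w s) wm)
      (2 * (ρ t * w t - ρm * wm) * (ρ' * w t + ρ t * w')
        - (ρ' * w t ^ 2 + ρ t * (2 * w t * w') + p' * ρ') * (ρ t - ρm)
        - ((ρ t * w t ^ 2 + p (ρ t)) - (ρm * wm ^ 2 + p ρm)) * ρ') t := by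
  have h := (((hρ.mul hw).sub_const (ρm * wm)).pow 2).sub
    ((((hρ.mul (hw.pow 2)).add (hp.comp t hρ)).sub_const (ρm * wm ^ 2 + p ρm)).mul
      (hρ.sub_const ρm))
  refine h.congr_deriv ?_
  simp only [Pi.mul_apply, Pi.pow_apply, Pi.add_apply, Function.comp_apply, Nat.cast_ofNat]
  ring

theorem jumpFunction_deriv_eq_of_shock {V : ℝ} (hjump : ρ t - ρm ≠ 0)
    (hV : V = (ρ t * w t - ρm * wm) / (ρ t - ρm)) (hI : jumpFunction p (ρ t) ρm (w t) wm = 0) :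
    2 * (ρ t * w t - ρm * wm) * (ρ' * w t + ρ t * w')
        - (ρ' * w t ^ 2 + ρ t * (2 * w t * w') + p' * ρ') * (ρ t - ρm)
        - ((ρ t * w t ^ 2 + p (ρ t)) - (ρm * wm ^ 2 + p ρm)) * ρ'
      = (ρ t - ρm) * (2 * ρ t * w' * (V - w t) - ρ' * ((V - w t) ^ 2 + p')) := by
  have hmass : ρ t * w t - ρm * wm = V * (ρ t - ρm) := by
    rw [hV, div_mul_cancel₀ _ hjump]
  have hmomentum : (ρ t * w t ^ 2 + p (ρ t)) - (ρm * wm ^ 2 + p ρm) = V ^ 2 * (ρ t - ρm) := by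
    apply mul_right_cancel₀ hjump
    unfold jumpFunction at hI
    rw [hmass] at hI
    linear_combination -hI
  rw [hmass, hmomentum]
  ring

theorem hasDerivAt_jumpFunction_of_shock {V : ℝ} (hp : HasDerivAt p p' (ρ t))
    (hρ : HasDerivAt ρ ρ' t) (hw : HasDerivAt w w' t) (hjump : ρ t - ρm ≠ 0)
    (hV : V = (ρ t * w t - ρm * wm) / (ρ t - ρm)) (hI : jumpFunction p (ρ t) ρm (w t) wm = 0) :
    HasDerivAt (fun s => jumpFunction p (ρ s) ρm (w s) wm)
      ((ρ t - ρm) * (2 * ρ t * w' * (V - w t) - ρ' * ((V - w t) ^ 2 + p'))) t :=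
  jumpFunction_deriv_eq_of_shock hjump hV hI ▸ hasDerivAt_jumpFunction hp hρ hw

end PlusStateCurve

theorem jump_function_riemann_partials_general
    (p η : ℝ → ℝ) (ρf wf : ℝ → ℝ → ℝ) (αp βp αm βm V : ℝ)
    (hηpos : 0 < η (ρf αp βp))
    (hjump : ρf αp βp - ρf αm βm ≠ 0)
    (hp : HasDerivAt p (η (ρf αp βp) ^ 2) (ρf αp βp))
    (hρβ : HasDerivAt (fun b => ρf αp b)
      (ρf αp βp / (2 * η (ρf αp βp))) βp)
    (hwβ : HasDerivAt (fun b => wf αp b) (-(1 / 2)) βp)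
    (hρα : HasDerivAt (fun a => ρf a βp)
      (ρf αp βp / (2 * η (ρf αp βp))) αp)
    (hwα : HasDerivAt (fun a => wf a βp) (1 / 2) αp)
    (hV : V = (ρf αp βp * wf αp βp - ρf αm βm * wf αm βm) /
      (ρf αp βp - ρf αm βm))
    (hI : (ρf αp βp * wf αp βp - ρf αm βm * wf αm βm) ^ 2 -
        ((ρf αp βp * wf αp βp ^ 2 + p (ρf αp βp)) -
          (ρf αm βm * wf αm βm ^ 2 + p (ρf αm βm))) *
          (ρf αp βp - ρf αm βm) = 0) :
    HasDerivAt
        (fun b => (ρf αp b * wf αp b - ρf αm βm * wf αm βm) ^ 2 -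
          ((ρf αp b * wf αp b ^ 2 + p (ρf αp b)) -
            (ρf αm βm * wf αm βm ^ 2 + p (ρf αm βm))) *
            (ρf αp b - ρf αm βm))
        (-((ρf αp βp - ρf αm βm) * ρf αp βp / (2 * η (ρf αp βp))) *
          (V - (wf αp βp - η (ρf αp βp))) ^ 2) βp ∧
      HasDerivAt
        (fun a => (ρf a βp * wf a βp - ρf αm βm * wf αm βm) ^ 2 -
          ((ρf a βp * wf a βp ^ 2 + p (ρf a βp)) -
            (ρf αm βm * wf αm βm ^ 2 + p (ρf αm βm))) *
            (ρf a βp - ρf αm βm))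
        (-((ρf αp βp - ρf αm βm) * ρf αp βp / (2 * η (ρf αp βp))) *
          ((wf αp βp + η (ρf αp βp)) - V) ^ 2) αp := by
  have hη : η (ρf αp βp) ≠ 0 := hηpos.ne'
  constructor
  · refine (hasDerivAt_jumpFunction_of_shock (ρ := fun b => ρf αp b) (w := fun b => wf αp b)
      hp hρβ hwβ hjump hV hI).congr_deriv ?_
    field_simp
    ring
  · refine (hasDerivAt_jumpFunction_of_shock (ρ := fun a => ρf a βp) (w := fun a => wf a βp)
      hp hρα hwα hjump hV hI).congr_deriv ?_
    field_simp
    ring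

/-- For the jump function in Riemann-invariant variables,
`J(α₊,β₊,α₋,β₋) = I(ρ(α₊,β₊), ρ(α₋,β₋), w(α₊,β₊), w(α₋,β₋))`, where `ρ, w`
invert the Riemann-invariant change of variables (so at the plus state
`∂ρ/∂β = ρ/(2η)`, `∂w/∂β = -1/2`, `∂ρ/∂α = ρ/(2η)`, `∂w/∂α = 1/2`), at any
point where `V = [ρw]/[ρ]` and `I = 0` one has
`∂J/∂β₊ = -([ρ]ρ₊/(2η₊))(V - c_in₊)²` and `∂J/∂α₊ = -([ρ]ρ₊/(2η₊))(c_out₊ - V)²`. -/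
theorem jump_function_riemann_partials
    (p η : ℝ → ℝ) (ρf wf : ℝ → ℝ → ℝ) (αp βp αm βm V : ℝ)
    (hηpos : 0 < η (ρf αp βp)) (hρpos : 0 < ρf αp βp)
    (hjump : ρf αp βp - ρf αm βm ≠ 0)
    (hp : HasDerivAt p (η (ρf αp βp) ^ 2) (ρf αp βp))
    (hρβ : HasDerivAt (fun b => ρf αp b)
      (ρf αp βp / (2 * η (ρf αp βp))) βp)
    (hwβ : HasDerivAt (fun b => wf αp b) (-(1 / 2)) βp)
    (hρα : HasDerivAt (fun a => ρf a βp)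
      (ρf αp βp / (2 * η (ρf αp βp))) αp)
    (hwα : HasDerivAt (fun a => wf a βp) (1 / 2) αp)
    (hV : V = (ρf αp βp * wf αp βp - ρf αm βm * wf αm βm) /
      (ρf αp βp - ρf αm βm))
    (hI : (ρf αp βp * wf αp βp - ρf αm βm * wf αm βm) ^ 2 -
        ((ρf αp βp * wf αp βp ^ 2 + p (ρf αp βp)) -
          (ρf αm βm * wf αm βm ^ 2 + p (ρf αm βm))) *
          (ρf αp βp - ρf αm βm) = 0) :
    HasDerivAt
        (fun b => (ρf αp b * wf αp b - ρf αm βm * wf αm βm) ^ 2 -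
          ((ρf αp b * wf αp b ^ 2 + p (ρf αp b)) -
            (ρf αm βm * wf αm βm ^ 2 + p (ρf αm βm))) *
            (ρf αp b - ρf αm βm))
        (-((ρf αp βp - ρf αm βm) * ρf αp βp / (2 * η (ρf αp βp))) *
          (V - (wf αp βp - η (ρf αp βp))) ^ 2) βp ∧
      HasDerivAt
        (fun a => (ρf a βp * wf a βp - ρf αm βm * wf αm βm) ^ 2 -
          ((ρf a βp * wf a βp ^ 2 + p (ρf a βp)) -
            (ρf αm βm * wf αm βm ^ 2 + p (ρf αm βm))) *
            (ρf a βp - ρf αm βm))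
        (-((ρf αp βp - ρf αm βm) * ρf αp βp / (2 * η (ρf αp βp))) *
          ((wf αp βp + η (ρf αp βp)) - V) ^ 2) αp :=
  jump_function_riemann_partials_general p η ρf wf αp βp αm βm V hηpos hjump hp hρβ hwβ hρα hwα hV
    hI
end

section
/- Let f ∈ C¹[0,∞) be increasing with f(0) = 0, f'(0) = a ∈ (0,1), and f(x) < x for x > 0. Then there exists ε* > 0 and an increasing function φ : [0,ε*] → ℝ with φ(0) = 0 solving the conjugacy (linearization) equation φ(a x) = f(φ(x)) for all x ∈ [0,ε*]. -/
/-!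
The interval `(a, 1]` is a fundamental domain of `x ↦ a * x` on `(0, 1]`, and `(f 1, 1]` is one
of `f`. Any increasing bijection `L` between them, here the affine one, extends to a conjugacy by
transport along the two dynamics: `φ x = f^[n] (L (x / a ^ n))` for `a ^ (n + 1) < x ≤ a ^ n`.
The pieces fit together because `L a = f 1` and `L 1 = 1`.
-/

open Set Function

structure IncreasingContraction (f : ℝ → ℝ) : Prop where
  strictMonoOn : StrictMonoOn f (Ici 0)
  map_zero : f 0 = 0
  lt_self : ∀ x, 0 < x → f x < x

namespace IncreasingContraction

variable {f : ℝ → ℝ}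

theorem mapsTo_Ioi (hf : IncreasingContraction f) : MapsTo f (Ioi 0) (Ioi 0) := fun x hx => by
  simpa [hf.map_zero] using hf.strictMonoOn self_mem_Ici (mem_Ici.2 (le_of_lt hx)) hx

theorem mapsTo_Ici (hf : IncreasingContraction f) : MapsTo f (Ici 0) (Ici 0) := fun x hx => by
  simpa [hf.map_zero] using hf.strictMonoOn.monotoneOn self_mem_Ici hx hx

theorem strictMonoOn_iterate (hf : IncreasingContraction f) (n : ℕ) :
    StrictMonoOn f^[n] (Ici 0) := by
  induction n with
  | zero => exact strictMono_id.strictMonoOn _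
  | succ n ih =>
    rw [iterate_succ']
    exact hf.strictMonoOn.comp ih (hf.mapsTo_Ici.iterate n)

theorem antitone_iterate_one (hf : IncreasingContraction f) : Antitone fun n => f^[n] 1 :=
  antitone_nat_of_succ_le fun n => by
    rw [iterate_succ_apply']
    exact (hf.lt_self _ (hf.mapsTo_Ioi.iterate n (mem_Ioi.2 one_pos))).le

end IncreasingContraction

section Band

variable {a x : ℝ}

open Classical in
noncomputable def band (a x : ℝ) : ℕ :=
  if h : ∃ n : ℕ, a ^ (n + 1) < x then Nat.find h else 0

theorem band_eq (ha : 0 ≤ a) (ha1 : a < 1) {n : ℕ} (hlt : a ^ (n + 1) < x) (hle : x ≤ a ^ n) :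
    band a x = n := by
  have h : ∃ n : ℕ, a ^ (n + 1) < x := ⟨n, hlt⟩
  rw [band, dif_pos h, Nat.find_eq_iff]
  refine ⟨hlt, fun k hk => not_lt.2 ?_⟩
  exact hle.trans (pow_le_pow_of_le_one ha ha1.le hk)

theorem band_spec (ha : 0 < a) (ha1 : a < 1) (hx : x ∈ Ioc 0 1) :
    a ^ (band a x + 1) < x ∧ x ≤ a ^ band a x := by
  obtain ⟨n, hlt, hle⟩ := exists_nat_pow_near_of_lt_one hx.1 hx.2 ha ha1
  rw [band_eq ha.le ha1 hlt hle]
  exact ⟨hlt, hle⟩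

theorem div_pow_band_mem_Ioc (ha : 0 < a) (ha1 : a < 1) (hx : x ∈ Ioc 0 1) :
    x / a ^ band a x ∈ Ioc a 1 := by
  obtain ⟨hlt, hle⟩ := band_spec ha ha1 hx
  have hpow : 0 < a ^ band a x := pow_pos ha _
  rw [pow_succ'] at hlt
  exact ⟨(lt_div_iff₀ hpow).2 hlt, (div_le_one hpow).2 hle⟩

theorem band_mul (ha : 0 < a) (ha1 : a < 1) (hx : x ∈ Ioc 0 1) :
    band a (a * x) = band a x + 1 := by
  obtain ⟨hlt, hle⟩ := band_spec ha ha1 hx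
  apply band_eq ha.le ha1
  · rw [pow_succ' a (band a x + 1)]
    exact mul_lt_mul_of_pos_left hlt ha
  · rw [pow_succ']
    exact mul_le_mul_of_nonneg_left hle ha.le

theorem band_anti (ha : 0 < a) (ha1 : a < 1) {y : ℝ} (hx : x ∈ Ioc 0 1) (hy : y ∈ Ioc 0 1)
    (hxy : x ≤ y) : band a y ≤ band a x := by
  by_contra! h
  have hx' := (band_spec ha ha1 hx).1
  have hy' := (band_spec ha ha1 hy).2
  have : a ^ band a y ≤ a ^ (band a x + 1) := pow_le_pow_of_le_one ha.le ha1.le h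
  linarith

end Band

section SegmentMap

variable {a b : ℝ}

noncomputable def segmentMap (a b t : ℝ) : ℝ := b + (t - a) * ((1 - b) / (1 - a))

theorem strictMono_segmentMap (ha1 : a < 1) (hb1 : b < 1) : StrictMono (segmentMap a b) :=
  fun s t hst => by
    have hslope : 0 < (1 - b) / (1 - a) := div_pos (by linarith) (by linarith)
    unfold segmentMap
    nlinarith

theorem segmentMap_left : segmentMap a b a = b := by simp [segmentMap]

theorem segmentMap_one (ha1 : a < 1) : segmentMap a b 1 = 1 := by
  have : 1 - a ≠ 0 := by linarith
  unfold segmentMap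
  field_simp
  ring

theorem mapsTo_segmentMap (ha1 : a < 1) (hb1 : b < 1) :
    MapsTo (segmentMap a b) (Ioc a 1) (Ioc b 1) := fun t ht => by
  have hmono := strictMono_segmentMap ha1 hb1
  have hlt := hmono ht.1
  have hle := hmono.monotone ht.2
  rw [segmentMap_left] at hlt
  rw [segmentMap_one ha1] at hle
  exact ⟨hlt, hle⟩

end SegmentMap

noncomputable def linearizingMap (f : ℝ → ℝ) (a x : ℝ) : ℝ :=
  if x ≤ 0 then 0 else f^[band a x] (segmentMap a (f 1) (x / a ^ band a x))

namespace IncreasingContraction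

variable {f : ℝ → ℝ} {a x : ℝ}

theorem linearizingMap_zero : linearizingMap f a 0 = 0 := if_pos le_rfl

theorem linearizingMap_of_pos (hx : 0 < x) :
    linearizingMap f a x = f^[band a x] (segmentMap a (f 1) (x / a ^ band a x)) :=
  if_neg hx.not_ge

theorem linearizingMap_mem_Ioc (hf : IncreasingContraction f) (ha : 0 < a) (ha1 : a < 1)
    (hx : x ∈ Ioc 0 1) :
    linearizingMap f a x ∈ Ioc (f^[band a x + 1] 1) (f^[band a x] 1) := by
  have hf1 : 0 < f 1 := hf.mapsTo_Ioi (mem_Ioi.2 one_pos)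
  have hL := mapsTo_segmentMap ha1 (hf.lt_self 1 one_pos) (div_pow_band_mem_Ioc ha ha1 hx)
  have hL0 : 0 ≤ segmentMap a (f 1) (x / a ^ band a x) := (hf1.trans hL.1).le
  have hmono := hf.strictMonoOn_iterate (band a x)
  rw [linearizingMap_of_pos hx.1, iterate_succ_apply]
  exact ⟨hmono hf1.le hL0 hL.1, hmono.monotoneOn hL0 (mem_Ici.2 zero_le_one) hL.2⟩

theorem linearizingMap_pos (hf : IncreasingContraction f) (ha : 0 < a) (ha1 : a < 1)
    (hx : x ∈ Ioc 0 1) : 0 < linearizingMap f a x :=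
  (hf.mapsTo_Ioi.iterate _ (mem_Ioi.2 one_pos)).out.trans (hf.linearizingMap_mem_Ioc ha ha1 hx).1

theorem linearizingMap_lt_of_band_eq (hf : IncreasingContraction f) (ha : 0 < a) (ha1 : a < 1)
    {y : ℝ} (hx : x ∈ Ioc 0 1) (hy : y ∈ Ioc 0 1) (hxy : x < y) (hband : band a x = band a y) :
    linearizingMap f a x < linearizingMap f a y := by
  have hf1 : f 1 < 1 := hf.lt_self 1 one_pos
  have hLx := mapsTo_segmentMap ha1 hf1 (div_pow_band_mem_Ioc ha ha1 hx)
  have hLy := mapsTo_segmentMap ha1 hf1 (div_pow_band_mem_Ioc ha ha1 hy)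
  have hf1pos : 0 < f 1 := hf.mapsTo_Ioi (mem_Ioi.2 one_pos)
  rw [← hband] at hLy
  rw [linearizingMap_of_pos hx.1, linearizingMap_of_pos hy.1, ← hband]
  exact hf.strictMonoOn_iterate _ (hf1pos.trans hLx.1).le (hf1pos.trans hLy.1).le
    (strictMono_segmentMap ha1 hf1 ((div_lt_div_iff_of_pos_right (pow_pos ha _)).2 hxy))

theorem strictMonoOn_linearizingMap (hf : IncreasingContraction f) (ha : 0 < a) (ha1 : a < 1) :
    StrictMonoOn (linearizingMap f a) (Icc 0 1) := by
  intro x hx y hy hxy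
  have hy' : y ∈ Ioc 0 1 := ⟨hx.1.trans_lt hxy, hy.2⟩
  rcases hx.1.eq_or_lt with rfl | hx0
  · rw [linearizingMap_zero]
    exact hf.linearizingMap_pos ha ha1 hy'
  have hx' : x ∈ Ioc 0 1 := ⟨hx0, hx.2⟩
  rcases (band_anti ha ha1 hx' hy' hxy.le).eq_or_lt with hband | hband
  · exact hf.linearizingMap_lt_of_band_eq ha ha1 hx' hy' hxy hband.symm
  calc linearizingMap f a x ≤ f^[band a x] 1 := (hf.linearizingMap_mem_Ioc ha ha1 hx').2
    _ ≤ f^[band a y + 1] 1 := hf.antitone_iterate_one hband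
    _ < linearizingMap f a y := (hf.linearizingMap_mem_Ioc ha ha1 hy').1

theorem linearizingMap_mul (hf : IncreasingContraction f) (ha : 0 < a) (ha1 : a < 1)
    (hx : x ∈ Icc 0 1) : linearizingMap f a (a * x) = f (linearizingMap f a x) := by
  rcases hx.1.eq_or_lt with rfl | hx0
  · rw [mul_zero, linearizingMap_zero, hf.map_zero]
  have hx' : x ∈ Ioc 0 1 := ⟨hx0, hx.2⟩
  have hdiv : a * x / a ^ (band a x + 1) = x / a ^ band a x := by
    rw [pow_succ']
    field_simp
  rw [linearizingMap_of_pos (mul_pos ha hx0), linearizingMap_of_pos hx0, band_mul ha ha1 hx',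
    hdiv, iterate_succ_apply']

end IncreasingContraction

theorem conjugacy_exists_general
    (f : ℝ → ℝ) (a : ℝ)
    (hmono : StrictMonoOn f (Set.Ici 0))
    (hf0 : f 0 = 0)
    (ha : 0 < a) (ha1 : a < 1)
    (hlt : ∀ x, 0 < x → f x < x) :
    ∃ ε > 0, ∃ φ : ℝ → ℝ,
      StrictMonoOn φ (Set.Icc 0 ε) ∧ φ 0 = 0 ∧
        ∀ x ∈ Set.Icc 0 ε, φ (a * x) = f (φ x) := by
  have hf : IncreasingContraction f := ⟨hmono, hf0, hlt⟩
  exact ⟨1, one_pos, linearizingMap f a, hf.strictMonoOn_linearizingMap ha ha1,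
    IncreasingContraction.linearizingMap_zero, fun _ hx => hf.linearizingMap_mul ha ha1 hx⟩

/-- Linearization of a one-dimensional contraction at its fixed point: if
`f ∈ C¹[0,∞)` is increasing with `f(0) = 0`, `f'(0) = a ∈ (0,1)` and
`f(x) < x` for `x > 0`, then there are `ε* > 0` and an increasing `φ` with
`φ(0) = 0` solving `φ(ax) = f(φ(x))` on `[0, ε*]`. -/
theorem conjugacy_exists
    (f : ℝ → ℝ) (a : ℝ)
    (hf : ContDiffOn ℝ 1 f (Set.Ici 0))
    (hmono : StrictMonoOn f (Set.Ici 0))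
    (hf0 : f 0 = 0)
    (hfa : HasDerivWithinAt f a (Set.Ici 0) 0)
    (ha : 0 < a) (ha1 : a < 1)
    (hlt : ∀ x, 0 < x → f x < x) :
    ∃ ε > 0, ∃ φ : ℝ → ℝ,
      StrictMonoOn φ (Set.Icc 0 ε) ∧ φ 0 = 0 ∧
        ∀ x ∈ Set.Icc 0 ε, φ (a * x) = f (φ x) :=
  conjugacy_exists_general f a hmono hf0 ha ha1 hlt
end

section
/- Let x, t be C² on a region, satisfying the characteristic equations ∂x/∂v = c_out ∂t/∂v and ∂x/∂u = c_in ∂t/∂u with c_out ≠ c_in, c_in, c_out nonvanishing and C¹. Then the mixed second derivative satisfies ∂²x/∂u∂v = μ ∂x/∂u + ν ∂x/∂v, where μ = (1/(c_out - c_in))·(c_out/c_in)·∂c_in/∂v and ν = -(1/(c_out - c_in))·(c_in/c_out)·∂c_out/∂u. -/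
/-!
Differentiate `∂ᵥx = c_out ∂ᵥt` in `u` and `∂ᵤx = c_in ∂ᵤt` in `v`. By symmetry of second
derivatives both give `∂ᵤ∂ᵥx`, so
`∂ᵤ∂ᵥx = ∂ᵤc_out ∂ᵥt + c_out ∂ᵤ∂ᵥt = ∂ᵥc_in ∂ᵤt + c_in ∂ᵤ∂ᵥt`.
Eliminating `∂ᵤ∂ᵥt` gives `(c_out - c_in) ∂ᵤ∂ᵥx = c_out ∂ᵥc_in ∂ᵤt - c_in ∂ᵤc_out ∂ᵥt`, and the
characteristic equations turn `∂ᵤt, ∂ᵥt` back into `∂ᵤx / c_in, ∂ᵥx / c_out`.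
-/

open Filter Function Topology

namespace PartialDeriv

variable {G : Type*} [NormedAddCommGroup G] [NormedSpace ℝ G]

theorem hasDerivAt_slice_fst {f : ℝ → ℝ → G} {u v : ℝ}
    (hf : DifferentiableAt ℝ (uncurry f) (u, v)) :
    HasDerivAt (fun u' => f u' v) (fderiv ℝ (uncurry f) (u, v) (1, 0)) u :=
  hf.hasFDerivAt.comp_hasDerivAt (f := fun u' => (u', v)) u
    ((hasDerivAt_id u).prodMk (hasDerivAt_const u v))

theorem hasDerivAt_slice_snd {f : ℝ → ℝ → G} {u v : ℝ}
    (hf : DifferentiableAt ℝ (uncurry f) (u, v)) :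
    HasDerivAt (fun v' => f u v') (fderiv ℝ (uncurry f) (u, v) (0, 1)) v :=
  hf.hasFDerivAt.comp_hasDerivAt (f := fun v' => (u, v')) v
    ((hasDerivAt_const v u).prodMk (hasDerivAt_id v))

theorem contDiff_uncurry_deriv_fst {f : ℝ → ℝ → G} {m n : WithTop ℕ∞}
    (hf : ContDiff ℝ n (uncurry f)) (hmn : m + 1 ≤ n) :
    ContDiff ℝ m (uncurry fun u v => deriv (fun u' => f u' v) u) := by
  have hdiff : Differentiable ℝ (uncurry f) :=
    hf.differentiable ((zero_lt_one.trans_le (le_add_self.trans hmn)).ne')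
  have heq : (uncurry fun u v => deriv (fun u' => f u' v) u) =
      fun p => fderiv ℝ (uncurry f) p (1, 0) :=
    funext fun p => (hasDerivAt_slice_fst (hdiff p)).deriv
  rw [heq]
  exact (hf.fderiv_right hmn).clm_apply contDiff_const

theorem contDiff_uncurry_deriv_snd {f : ℝ → ℝ → G} {m n : WithTop ℕ∞}
    (hf : ContDiff ℝ n (uncurry f)) (hmn : m + 1 ≤ n) :
    ContDiff ℝ m (uncurry fun u v => deriv (fun v' => f u v') v) := by
  have hdiff : Differentiable ℝ (uncurry f) :=
    hf.differentiable ((zero_lt_one.trans_le (le_add_self.trans hmn)).ne')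
  have heq : (uncurry fun u v => deriv (fun v' => f u v') v) =
      fun p => fderiv ℝ (uncurry f) p (0, 1) :=
    funext fun p => (hasDerivAt_slice_snd (hdiff p)).deriv
  rw [heq]
  exact (hf.fderiv_right hmn).clm_apply contDiff_const

theorem fderiv_fderiv_apply_const {E : Type*} [NormedAddCommGroup E] [NormedSpace ℝ E]
    {F : E → G} {p : E} (hF : DifferentiableAt ℝ (fderiv ℝ F) p) (w z : E) :
    fderiv ℝ (fun q => fderiv ℝ F q w) p z = fderiv ℝ (fderiv ℝ F) p z w := by
  rw [fderiv_clm_apply hF (differentiableAt_const w)]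
  simp

theorem deriv_fst_deriv_snd_eq_fderiv_fderiv {f : ℝ → ℝ → G}
    (hf : ContDiff ℝ 2 (uncurry f)) (u v : ℝ) :
    deriv (fun u' => deriv (fun v' => f u' v') v) u =
      fderiv ℝ (fderiv ℝ (uncurry f)) (u, v) (1, 0) (0, 1) := by
  have hdiff2 : Differentiable ℝ (fderiv ℝ (uncurry f)) :=
    (hf.fderiv_right (m := 1) (by norm_num)).differentiable one_ne_zero
  have hdiff : Differentiable ℝ (uncurry f) := hf.differentiable two_ne_zero
  calc deriv (fun u' => deriv (fun v' => f u' v') v) u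
      = deriv (fun u' => fderiv ℝ (uncurry f) (u', v) (0, 1)) u := by
        congr 1
        funext u'
        exact (hasDerivAt_slice_snd (hdiff (u', v))).deriv
    _ = fderiv ℝ (fun q => fderiv ℝ (uncurry f) q (0, 1)) (u, v) (1, 0) :=
        (hasDerivAt_slice_fst (f := fun u' v' => fderiv ℝ (uncurry f) (u', v') (0, 1))
          ((hdiff2.clm_apply (differentiable_const _)) _)).deriv
    _ = fderiv ℝ (fderiv ℝ (uncurry f)) (u, v) (1, 0) (0, 1) :=
        fderiv_fderiv_apply_const (hdiff2 _) _ _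

theorem deriv_snd_deriv_fst_eq_fderiv_fderiv {f : ℝ → ℝ → G}
    (hf : ContDiff ℝ 2 (uncurry f)) (u v : ℝ) :
    deriv (fun v' => deriv (fun u' => f u' v') u) v =
      fderiv ℝ (fderiv ℝ (uncurry f)) (u, v) (0, 1) (1, 0) := by
  have hdiff2 : Differentiable ℝ (fderiv ℝ (uncurry f)) :=
    (hf.fderiv_right (m := 1) (by norm_num)).differentiable one_ne_zero
  have hdiff : Differentiable ℝ (uncurry f) := hf.differentiable two_ne_zero
  calc deriv (fun v' => deriv (fun u' => f u' v') u) v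
      = deriv (fun v' => fderiv ℝ (uncurry f) (u, v') (1, 0)) v := by
        congr 1
        funext v'
        exact (hasDerivAt_slice_fst (hdiff (u, v'))).deriv
    _ = fderiv ℝ (fun q => fderiv ℝ (uncurry f) q (1, 0)) (u, v) (0, 1) :=
        (hasDerivAt_slice_snd (f := fun u' v' => fderiv ℝ (uncurry f) (u', v') (1, 0))
          ((hdiff2.clm_apply (differentiable_const _)) _)).deriv
    _ = fderiv ℝ (fderiv ℝ (uncurry f)) (u, v) (0, 1) (1, 0) :=
        fderiv_fderiv_apply_const (hdiff2 _) _ _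

theorem deriv_fst_deriv_snd_comm {f : ℝ → ℝ → G} (hf : ContDiff ℝ 2 (uncurry f)) (u v : ℝ) :
    deriv (fun u' => deriv (fun v' => f u' v') v) u =
      deriv (fun v' => deriv (fun u' => f u' v') u) v := by
  rw [deriv_fst_deriv_snd_eq_fderiv_fderiv hf, deriv_snd_deriv_fst_eq_fderiv_fderiv hf]
  exact hf.contDiffAt.isSymmSndFDerivAt (by simp [minSmoothness_of_isRCLikeNormedField]) _ _

end PartialDeriv

open PartialDeriv

/-- For `x, t` C² satisfying the characteristic equations
`∂x/∂v = c_out ∂t/∂v`, `∂x/∂u = c_in ∂t/∂u` on an open region, with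
`c_in, c_out` C¹, nonvanishing and `c_out ≠ c_in`, the mixed second derivative
satisfies `∂²x/∂u∂v = μ ∂x/∂u + ν ∂x/∂v` with
`μ = (1/(c_out - c_in))(c_out/c_in) ∂c_in/∂v` and
`ν = -(1/(c_out - c_in))(c_in/c_out) ∂c_out/∂u`. -/
theorem mixed_derivative_equation
    (U : Set (ℝ × ℝ)) (hU : IsOpen U)
    (x t cin cout : ℝ → ℝ → ℝ)
    (hx : ContDiff ℝ 2 (fun q : ℝ × ℝ => x q.1 q.2))
    (ht : ContDiff ℝ 2 (fun q : ℝ × ℝ => t q.1 q.2))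
    (hcin : ContDiff ℝ 1 (fun q : ℝ × ℝ => cin q.1 q.2))
    (hcout : ContDiff ℝ 1 (fun q : ℝ × ℝ => cout q.1 q.2))
    (hne : ∀ u v : ℝ, (u, v) ∈ U → cout u v ≠ cin u v)
    (hcin0 : ∀ u v : ℝ, (u, v) ∈ U → cin u v ≠ 0)
    (hcout0 : ∀ u v : ℝ, (u, v) ∈ U → cout u v ≠ 0)
    (hcharv : ∀ u v : ℝ, (u, v) ∈ U →
      deriv (fun v' => x u v') v = cout u v * deriv (fun v' => t u v') v)
    (hcharu : ∀ u v : ℝ, (u, v) ∈ U →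
      deriv (fun u' => x u' v) u = cin u v * deriv (fun u' => t u' v) u) :
    ∀ u v : ℝ, (u, v) ∈ U →
      deriv (fun u' => deriv (fun v' => x u' v') v) u =
        (1 / (cout u v - cin u v)) * (cout u v / cin u v) *
            deriv (fun v' => cin u v') v * deriv (fun u' => x u' v) u +
          (-(1 / (cout u v - cin u v)) * (cin u v / cout u v) *
            deriv (fun u' => cout u' v) u) * deriv (fun v' => x u v') v := by
  intro u v huv
  have hnu : ∀ᶠ u' in 𝓝 u, (u', v) ∈ U :=
    (continuous_id.prodMk continuous_const).continuousAt.preimage_mem_nhds (hU.mem_nhds huv)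
  have hnv : ∀ᶠ v' in 𝓝 v, (u, v') ∈ U :=
    (continuous_const.prodMk continuous_id).continuousAt.preimage_mem_nhds (hU.mem_nhds huv)
  have htv : Differentiable ℝ (uncurry fun u v => deriv (fun v' => t u v') v) :=
    (contDiff_uncurry_deriv_snd ht (m := 1) (by norm_num)).differentiable one_ne_zero
  have htu : Differentiable ℝ (uncurry fun u v => deriv (fun u' => t u' v) u) :=
    (contDiff_uncurry_deriv_fst ht (m := 1) (by norm_num)).differentiable one_ne_zero
  have hcoutu := (hasDerivAt_slice_fst (hcout.differentiable one_ne_zero (u, v))).differentiableAt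
  have hcinv := (hasDerivAt_slice_snd (hcin.differentiable one_ne_zero (u, v))).differentiableAt
  have hcharv_u : deriv (fun u' => deriv (fun v' => x u' v') v) u =
      deriv (fun u' => cout u' v) u * deriv (fun v' => t u v') v +
        cout u v * deriv (fun u' => deriv (fun v' => t u' v') v) u := by
    rw [EventuallyEq.deriv_eq (hnu.mono fun u' hu' => hcharv u' v hu'),
      deriv_fun_mul hcoutu (hasDerivAt_slice_fst (htv (u, v))).differentiableAt]
  have hcharu_v : deriv (fun u' => deriv (fun v' => x u' v') v) u =
      deriv (fun v' => cin u v') v * deriv (fun u' => t u' v) u +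
        cin u v * deriv (fun u' => deriv (fun v' => t u' v') v) u := by
    rw [deriv_fst_deriv_snd_comm hx, deriv_fst_deriv_snd_comm ht,
      EventuallyEq.deriv_eq (hnv.mono fun v' hv' => hcharu u v' hv'),
      deriv_fun_mul hcinv (hasDerivAt_slice_snd (htu (u, v))).differentiableAt]
  have hsub : cout u v - cin u v ≠ 0 := sub_ne_zero.mpr (hne u v huv)
  have hcin_ne := hcin0 u v huv
  have hcout_ne := hcout0 u v huv
  rw [hcharu u v huv, hcharv u v huv]
  field_simp
  linear_combination cout u v * hcharu_v - cin u v * hcharv_u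
end
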